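/- arXiv:math/0502492 — 6 statements merged into one kernel-verified Lean document; each statement's English description precedes it below -/
import Mathlib

section
/- For all integers R₁, R₂ ≥ 1 and v₁, v₂ ≥ 0, with u = v₁ + v₂ + 2, the double sum M₁(R₁,R₂) has the integral representation M₁(R₁,R₂) = (1/(R₁R₂)) · [(2v₁+1)!(2v₂+1)!/(2^{2v₁+2v₂} v₁!(v₁+1)!(v₂!)²)] · ∫₀¹ ₃F₂[−R₁, R₁, v₁+3/2; 1/2, v₁+2; x/4] · ₃F₂[−R₂, R₂, v₂+3/2; 3/2, v₂+1; x/4] · x^{u−1} dx. -/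
open Real Filter

/-- The Pochhammer symbol `(a)_k = a(a+1)···(a+k−1)`. -/
noncomputable def poch (a : ℝ) (k : ℕ) : ℝ := ∏ i ∈ Finset.range k, (a + i)

/-- The terminating hypergeometric sum `₃F₂[−m, b, c; d, e; z]`. -/
noncomputable def F32 (m : ℕ) (b c d e z : ℝ) : ℝ :=
  ∑ k ∈ Finset.range (m+1),
    (poch (-(m:ℝ)) k * poch b k * poch c k) / ((k.factorial : ℝ) * poch d k * poch e k) * z^k

/-- The double sum `M_ν(R1,R2)` (with weight function `ν(a,c)`), where `u = v1+v2+2`. -/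
noncomputable def Mnu (ν : ℕ → ℕ → ℝ) (v1 v2 R1 R2 : ℕ) : ℝ :=
  ∑ a ∈ Finset.range (R1+1), ∑ c ∈ Finset.range (R2+1),
    (-1 : ℝ)^(a+c)
    * ((R1+a-1).factorial / ((2*a).factorial * (R1-a).factorial) : ℝ)
    * ((R2+c-1).factorial / ((2*c+1).factorial * (R2-c).factorial) : ℝ)
    * ((2*v1+2*a+1).factorial / (2^(2*v1+2*a) * (v1+a).factorial * (v1+a+1).factorial) : ℝ)
    * ((2*v2+2*c+1).factorial / (2^(2*v2+2*c) * ((v2+c).factorial)^2) : ℝ)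
    * (ν a c / ((v1:ℝ) + v2 + 2 + a + c))

/-- `M₁` is the case `ν(a,c) = 1`. -/
noncomputable def M1 (v1 v2 R1 R2 : ℕ) : ℝ := Mnu (fun _ _ => 1) v1 v2 R1 R2

/-!
Expanding both `₃F₂` polynomials and integrating term by term, `∫₀¹ x^(u-1+a+c) dx = 1/(u+a+c)`
produces exactly the denominators of `M₁`. What remains is to see that the `a`-th coefficient of
each `₃F₂` (with the `4^{-a}` of the argument `x/4`) is the matching factor of the summand of `M₁`,
up to a constant independent of `a` that cancels the prefactor: this follows from closed forms of
the Pochhammer symbols at `-R`, `R`, `1/2`, `3/2` and `v + 3/2`.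
-/

lemma poch_zero (a : ℝ) : poch a 0 = 1 := Finset.prod_range_zero _

lemma poch_succ (a : ℝ) (k : ℕ) : poch a (k + 1) = poch a k * (a + k) := Finset.prod_range_succ _ _

lemma factorial_cast_ne_zero (n : ℕ) : (n.factorial : ℝ) ≠ 0 := mod_cast n.factorial_ne_zero

lemma factorial_succ_cast (n : ℕ) : ((n + 1).factorial : ℝ) = (n + 1) * n.factorial := by
  push_cast [Nat.factorial_succ]; ring

lemma poch_natCast_add_one (n k : ℕ) : poch ((n : ℝ) + 1) k = (n + k).factorial / n.factorial := by
  induction k with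
  | zero => simp [poch_zero, div_self (factorial_cast_ne_zero n)]
  | succ k ih =>
    rw [poch_succ, ih, ← add_assoc, factorial_succ_cast, div_mul_eq_mul_div,
      div_eq_div_iff (factorial_cast_ne_zero n) (factorial_cast_ne_zero n)]
    push_cast; ring

lemma poch_natCast {n : ℕ} (hn : 1 ≤ n) (k : ℕ) :
    poch (n : ℝ) k = (n + k - 1).factorial / (n - 1).factorial := by
  obtain ⟨m, rfl⟩ := Nat.exists_eq_add_of_le' hn
  simpa [Nat.add_right_comm m 1 k] using poch_natCast_add_one m k

lemma poch_neg_natCast {n k : ℕ} (hk : k ≤ n) :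
    poch (-(n : ℝ)) k = (-1) ^ k * n.factorial / (n - k).factorial := by
  induction k with
  | zero => simp [poch_zero, div_self (factorial_cast_ne_zero n)]
  | succ k ih =>
    have hnk : n - k = (n - (k + 1)) + 1 := by omega
    rw [poch_succ, ih (by omega), hnk, factorial_succ_cast, div_mul_eq_mul_div,
      div_eq_div_iff (by positivity) (factorial_cast_ne_zero _)]
    push_cast [Nat.cast_sub hk]; ring

lemma poch_half (k : ℕ) : poch (1 / 2 : ℝ) k = (2 * k).factorial / (4 ^ k * k.factorial) := by
  induction k with
  | zero => simp [poch_zero]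
  | succ k ih =>
    rw [poch_succ, ih, show 2 * (k + 1) = 2 * k + 1 + 1 by ring, factorial_succ_cast,
      factorial_succ_cast, factorial_succ_cast, div_mul_eq_mul_div,
      div_eq_div_iff (by positivity) (by positivity)]
    push_cast; ring

lemma poch_natCast_add_three_halves (v k : ℕ) :
    poch ((v : ℝ) + 3 / 2) k =
      (2 * v + 2 * k + 1).factorial * v.factorial /
        ((2 * v + 1).factorial * (v + k).factorial * 4 ^ k) := by
  induction k with
  | zero =>
    simp only [poch_zero, mul_zero, add_zero, pow_zero, mul_one]
    field_simp [factorial_cast_ne_zero]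
  | succ k ih =>
    rw [poch_succ, ih, show 2 * v + 2 * (k + 1) + 1 = 2 * v + 2 * k + 1 + 1 + 1 by ring,
      ← add_assoc, factorial_succ_cast (2 * v + 2 * k + 1 + 1),
      factorial_succ_cast (2 * v + 2 * k + 1), factorial_succ_cast (v + k),
      div_mul_eq_mul_div, div_eq_div_iff (by positivity) (by positivity)]
    push_cast; ring

lemma poch_three_halves (k : ℕ) :
    poch (3 / 2 : ℝ) k = (2 * k + 1).factorial / (k.factorial * 4 ^ k) := by
  simpa using poch_natCast_add_three_halves 0 k

lemma F32_half_eq_sum {R : ℕ} (hR : 1 ≤ R) (v : ℕ) (x : ℝ) :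
    F32 R R ((v : ℝ) + 3 / 2) (1 / 2) ((v : ℝ) + 2) (x / 4) =
      R * (2 ^ (2 * v) * v.factorial * (v + 1).factorial / (2 * v + 1).factorial) *
        ∑ a ∈ Finset.range (R + 1),
          (-1) ^ a * ((R + a - 1).factorial / ((2 * a).factorial * (R - a).factorial) : ℝ) *
            ((2 * v + 2 * a + 1).factorial /
              (2 ^ (2 * v + 2 * a) * (v + a).factorial * (v + a + 1).factorial) : ℝ) * x ^ a := by
  rw [F32, Finset.mul_sum]
  refine Finset.sum_congr rfl fun a ha => ?_
  have haR : a ≤ R := Nat.lt_succ_iff.mp (Finset.mem_range.mp ha)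
  rw [poch_neg_natCast haR, poch_natCast hR, poch_natCast_add_three_halves, poch_half,
    show (v : ℝ) + 2 = ((v + 1 : ℕ) : ℝ) + 1 by push_cast; ring, poch_natCast_add_one,
    show v + 1 + a = v + a + 1 by ring]
  obtain ⟨r, rfl⟩ := Nat.exists_eq_add_of_le' hR
  rw [show r + 1 + a - 1 = r + a by omega, Nat.add_sub_cancel, factorial_succ_cast r,
    factorial_succ_cast v, div_pow, pow_add, pow_mul, pow_mul]
  field_simp [factorial_cast_ne_zero]
  push_cast
  ring

lemma F32_three_halves_eq_sum {R : ℕ} (hR : 1 ≤ R) (v : ℕ) (x : ℝ) :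
    F32 R R ((v : ℝ) + 3 / 2) (3 / 2) ((v : ℝ) + 1) (x / 4) =
      R * (2 ^ (2 * v) * v.factorial ^ 2 / (2 * v + 1).factorial) *
        ∑ c ∈ Finset.range (R + 1),
          (-1) ^ c * ((R + c - 1).factorial / ((2 * c + 1).factorial * (R - c).factorial) : ℝ) *
            ((2 * v + 2 * c + 1).factorial / (2 ^ (2 * v + 2 * c) * (v + c).factorial ^ 2) : ℝ) *
              x ^ c := by
  rw [F32, Finset.mul_sum]
  refine Finset.sum_congr rfl fun c hc => ?_
  have hcR : c ≤ R := Nat.lt_succ_iff.mp (Finset.mem_range.mp hc)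
  rw [poch_neg_natCast hcR, poch_natCast hR, poch_natCast_add_three_halves, poch_three_halves,
    poch_natCast_add_one]
  obtain ⟨r, rfl⟩ := Nat.exists_eq_add_of_le' hR
  rw [show r + 1 + c - 1 = r + c by omega, Nat.add_sub_cancel, factorial_succ_cast r,
    div_pow, pow_add, pow_mul, pow_mul]
  field_simp [factorial_cast_ne_zero]
  push_cast
  ring

lemma integral_sum_mul_sum_mul_pow (s t : Finset ℕ) (f g : ℕ → ℝ) (n : ℕ) :
    ∫ x in (0 : ℝ)..1, (∑ a ∈ s, f a * x ^ a) * (∑ c ∈ t, g c * x ^ c) * x ^ n =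
      ∑ a ∈ s, ∑ c ∈ t, f a * g c / ((n : ℝ) + a + c + 1) := by
  have hexpand : ∀ x : ℝ, (∑ a ∈ s, f a * x ^ a) * (∑ c ∈ t, g c * x ^ c) * x ^ n =
      ∑ a ∈ s, ∑ c ∈ t, f a * g c * x ^ (n + a + c) := fun x => by
    rw [Finset.sum_mul_sum, Finset.sum_mul]
    refine Finset.sum_congr rfl fun a _ => ?_
    rw [Finset.sum_mul]
    exact Finset.sum_congr rfl fun c _ => by ring
  simp only [hexpand]
  rw [intervalIntegral.integral_finsetSum fun a _ => by
    apply Continuous.intervalIntegrable; fun_prop]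
  refine Finset.sum_congr rfl fun a _ => ?_
  rw [intervalIntegral.integral_finsetSum fun c _ => by
    apply Continuous.intervalIntegrable; fun_prop]
  refine Finset.sum_congr rfl fun c _ => ?_
  rw [intervalIntegral.integral_const_mul, integral_pow]
  push_cast
  simp [div_eq_mul_inv, mul_assoc]

/-- Integral representation of `M₁` (Proposition 3.1):
`M₁ = (1/(R₁R₂)) · [(2v₁+1)!(2v₂+1)!/(2^{2v₁+2v₂} v₁!(v₁+1)!(v₂!)²)] ·`
`∫₀¹ ₃F₂[−R₁,R₁,v₁+3/2; 1/2,v₁+2; x/4] ₃F₂[−R₂,R₂,v₂+3/2; 3/2,v₂+1; x/4] x^{u−1} dx`. -/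
theorem M1_integral_representation (R1 R2 v1 v2 : ℕ) (hR1 : 1 ≤ R1) (hR2 : 1 ≤ R2) :
    M1 v1 v2 R1 R2 =
      (1 / ((R1:ℝ) * R2)) *
        (((2*v1+1).factorial * (2*v2+1).factorial : ℝ) /
          (2^(2*v1+2*v2) * v1.factorial * (v1+1).factorial * (v2.factorial)^2)) *
        ∫ x in (0:ℝ)..1,
          F32 R1 (R1:ℝ) ((v1:ℝ) + 3/2) (1/2) ((v1:ℝ) + 2) (x/4) *
          F32 R2 (R2:ℝ) ((v2:ℝ) + 3/2) (3/2) ((v2:ℝ) + 1) (x/4) *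
          x ^ (v1+v2+1) := by
  simp_rw [F32_half_eq_sum hR1, F32_three_halves_eq_sum hR2, mul_mul_mul_comm _ (Finset.sum _ _),
    mul_assoc _ (Finset.sum _ _ * Finset.sum _ _), intervalIntegral.integral_const_mul,
    integral_sum_mul_sum_mul_pow]
  rw [← mul_assoc, ← one_mul (M1 v1 v2 R1 R2)]
  congr 1
  · have hR1' : (R1 : ℝ) ≠ 0 := Nat.cast_ne_zero.mpr (by omega)
    have hR2' : (R2 : ℝ) ≠ 0 := Nat.cast_ne_zero.mpr (by omega)
    field_simp [factorial_cast_ne_zero]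
    ring
  · unfold M1 Mnu
    refine Finset.sum_congr rfl fun a _ => Finset.sum_congr rfl fun c _ => ?_
    push_cast
    ring
end

section
/- Let q > 0 and c be fixed real numbers. Then as r → ∞ through positive integers, ∫₀¹ ((4−t)/t)^{1/2} t^{qr+c−1} cos(r·arccos(1−t/2)) dt = (1/r) · (√3/√(q² + 1/3)) · cos(rπ/3 − arctan(1/(q√3))) + o(r^{−1}). -/
/-!
Substituting `t = exp (-s / r)` turns `r` times the integral into `exp (i r π / 3)` times the
integral over `s > 0` of `√(t (4 - t)) t ^ (c - 1) e ^ (-q s) exp (i r (arccos (1 - t / 2) - π / 3))`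
(the factor `t ^ (q r)` becomes exactly `e ^ (-q s)`). As `r → ∞`, `t → 1` and, since
`arccos (1 - t / 2)` has derivative `1 / √3` at `t = 1`, the phase tends to `-s / √3`; by dominated
convergence the integral tends to `∫ √3 e ^ (-(q + i / √3) s) ds = √3 / (q + i / √3)`. Taking real
parts gives the amplitude `√3 / √(q² + 1/3)` and the phase shift `arctan (1 / (q √3))`.
-/

open Real Filter MeasureTheory Set Topology

section ChangeOfVariables

variable {E : Type*} [NormedAddCommGroup E] [NormedSpace ℝ E] {R : ℝ}

lemma image_exp_neg_div_Ioi (hR : 0 < R) : (fun s => exp (-s / R)) '' Ioi 0 = Ioo 0 1 := by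
  ext t
  constructor
  · rintro ⟨s, hs, rfl⟩
    exact ⟨exp_pos _, exp_lt_one_iff.mpr (div_neg_of_neg_of_pos (neg_neg_of_pos hs) hR)⟩
  · rintro ⟨ht0, ht1⟩
    refine ⟨-R * log t, mul_pos_of_neg_of_neg (neg_neg_of_pos hR) (log_neg ht0 ht1), ?_⟩
    simp [hR.ne', exp_log ht0]

lemma hasDerivAt_exp_neg_div (R s : ℝ) :
    HasDerivAt (fun s => exp (-s / R)) (-exp (-s / R) / R) s := by
  simpa [neg_div, div_eq_mul_inv] using ((hasDerivAt_id s).neg.div_const R).exp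

lemma injective_exp_neg_div (hR : R ≠ 0) : Function.Injective fun s => exp (-s / R) := by
  intro a b h
  simpa [hR] using exp_injective h

lemma abs_neg_exp_neg_div_div (hR : 0 < R) (s : ℝ) :
    |-exp (-s / R) / R| = exp (-s / R) / R := by
  rw [neg_div, abs_neg, abs_of_pos (div_pos (exp_pos _) hR)]

lemma integrableOn_Ioo_zero_one_iff_exp_neg_div (hR : 0 < R) (f : ℝ → E) :
    IntegrableOn f (Ioo 0 1) ↔
      IntegrableOn (fun s => (exp (-s / R) / R) • f (exp (-s / R))) (Ioi 0) := by
  rw [← image_exp_neg_div_Ioi hR, integrableOn_image_iff_integrableOn_abs_deriv_smul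
    measurableSet_Ioi (fun s _ => (hasDerivAt_exp_neg_div R s).hasDerivWithinAt)
    (injective_exp_neg_div hR.ne').injOn]
  simp only [abs_neg_exp_neg_div_div hR]

lemma integral_Ioo_zero_one_eq_exp_neg_div (hR : 0 < R) (f : ℝ → E) :
    ∫ t in Ioo 0 1, f t = ∫ s in Ioi 0, (exp (-s / R) / R) • f (exp (-s / R)) := by
  rw [← image_exp_neg_div_Ioi hR, integral_image_eq_integral_abs_deriv_smul
    measurableSet_Ioi (fun s _ => (hasDerivAt_exp_neg_div R s).hasDerivWithinAt)
    (injective_exp_neg_div hR.ne').injOn]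
  simp only [abs_neg_exp_neg_div_div hR]

end ChangeOfVariables

lemma tendsto_natCast_mul_sub_of_hasDerivAt {g : ℝ → ℝ} {d : ℝ} (h : HasDerivAt g d 0) :
    Tendsto (fun r : ℕ => (r : ℝ) * (g (r : ℝ)⁻¹ - g 0)) atTop (𝓝 d) := by
  have hinv : Tendsto (fun r : ℕ => (r : ℝ)⁻¹) atTop (𝓝[≠] 0) :=
    (tendsto_inv_atTop_nhdsGT_zero.comp tendsto_natCast_atTop_atTop).mono_right
      (nhdsGT_le_nhdsNE 0)
  simpa [Function.comp_def] using (hasDerivAt_iff_tendsto_slope_zero.mp h).comp hinv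

lemma integral_exp_neg_mul_Ioi_zero {a : ℂ} (ha : 0 < a.re) :
    ∫ s in Ioi (0 : ℝ), Complex.exp (-(a * s)) = a⁻¹ := by
  simpa [neg_mul] using integral_exp_mul_complex_Ioi (a := -a) (by simpa using ha) 0

lemma re_exp_mul_I_div {x : ℝ} (hx : 0 < x) (y β : ℝ) :
    (Complex.exp (β * Complex.I) / (x + y * Complex.I)).re =
      cos (β - arctan (y / x)) / √(x ^ 2 + y ^ 2) := by
  have hsqrt : √(1 + (y / x) ^ 2) = √(x ^ 2 + y ^ 2) / x := by
    rw [show 1 + (y / x) ^ 2 = (x ^ 2 + y ^ 2) / x ^ 2 by field_simp,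
      sqrt_div' _ (sq_nonneg x), sqrt_sq hx.le]
  have hpos : 0 < √(x ^ 2 + y ^ 2) := sqrt_pos.mpr (by positivity)
  have hsq : x ^ 2 + y ^ 2 = √(x ^ 2 + y ^ 2) ^ 2 := (sq_sqrt (by positivity)).symm
  rw [cos_sub, cos_arctan, sin_arctan, hsqrt, Complex.exp_mul_I]
  simp only [Complex.div_re, Complex.add_re, Complex.cos_ofReal_re, Complex.mul_re,
    Complex.sin_ofReal_re, Complex.I_re, mul_zero, Complex.sin_ofReal_im, Complex.I_im, mul_one,
    sub_self, add_zero, Complex.ofReal_re, Complex.ofReal_im, Complex.normSq_apply,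
    Complex.add_im, Complex.mul_im, zero_add, Complex.cos_ofReal_im, one_div, inv_div]
  field_simp
  rw [← hsq]
  ring

lemma hasDerivAt_arccos_one_sub_half : HasDerivAt (fun t => arccos (1 - t / 2)) (√3)⁻¹ 1 := by
  have h := (hasDerivAt_arccos (x := 1 / 2) (by norm_num) (by norm_num)).comp_of_eq (1 : ℝ)
    (((hasDerivAt_id (1 : ℝ)).div_const 2).const_sub 1) (by norm_num)
  have hsqrt : √(1 - (1 / 2 : ℝ) ^ 2) = √3 / 2 := by
    rw [show (1 - (1 / 2 : ℝ) ^ 2) = 3 / 2 ^ 2 by norm_num, sqrt_div' _ (by norm_num),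
      sqrt_sq (by norm_num)]
  exact h.congr_deriv (by rw [hsqrt]; field_simp)

lemma arccos_one_half : arccos (1 / 2) = π / 3 := by
  rw [← cos_pi_div_three, arccos_cos (by positivity) (by linarith [pi_pos])]

lemma tendsto_natCast_mul_arccos_sub_pi_div_three (s : ℝ) :
    Tendsto (fun r : ℕ => (r : ℝ) * (arccos (1 - exp (-s / r) / 2) - π / 3)) atTop
      (𝓝 (-s * (√3)⁻¹)) := by
  have h := hasDerivAt_arccos_one_sub_half.comp_of_eq (0 : ℝ)
    (by simpa using ((hasDerivAt_id (0 : ℝ)).const_mul (-s)).exp :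
      HasDerivAt (fun x => exp (-s * x)) (-s) 0) (by simp)
  rw [mul_comm]
  refine (tendsto_natCast_mul_sub_of_hasDerivAt h).congr fun r => ?_
  norm_num [div_eq_mul_inv, arccos_one_half]

lemma mul_rpow_half_four_sub_div {t : ℝ} (ht : 0 < t) :
    t * ((4 - t) / t) ^ ((1 : ℝ) / 2) = √(t * (4 - t)) := by
  rw [← sqrt_eq_rpow, show (4 - t) / t = t * (4 - t) / t ^ 2 by field_simp,
    sqrt_div' _ (sq_nonneg t), sqrt_sq ht.le]
  field_simp

lemma exp_neg_div_rpow_mul {R : ℝ} (hR : R ≠ 0) (q s : ℝ) :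
    exp (-s / R) ^ (q * R) = exp (-(q * s)) := by
  rw [← exp_mul]
  field_simp

noncomputable def momentIntegrand (q c R t : ℝ) : ℂ :=
  ((((4 - t) / t) ^ ((1 : ℝ) / 2) * t ^ (q * R + c - 1) : ℝ) : ℂ) *
    Complex.exp (((R * arccos (1 - t / 2) : ℝ) : ℂ) * Complex.I)

/-- `momentIntegrand q c R` after the substitution `t = exp (-s / R)`, multiplied by `R` and with
the phase `exp (i R π / 3)` taken out. -/
noncomputable def substIntegrand (q c R s : ℝ) : ℂ :=
  ((√(exp (-s / R) * (4 - exp (-s / R))) * exp (-s / R) ^ (c - 1) * exp (-(q * s)) : ℝ) : ℂ) *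
    Complex.exp (((R * (arccos (1 - exp (-s / R) / 2) - π / 3) : ℝ) : ℂ) * Complex.I)

lemma re_momentIntegrand (q c R t : ℝ) :
    (momentIntegrand q c R t).re =
      ((4 - t) / t) ^ ((1 : ℝ) / 2) * t ^ (q * R + c - 1) * cos (R * arccos (1 - t / 2)) := by
  rw [momentIntegrand, Complex.re_ofReal_mul, Complex.exp_ofReal_mul_I_re]

lemma exp_neg_div_smul_momentIntegrand {R : ℝ} (hR : 0 < R) (q c s : ℝ) :
    (exp (-s / R) / R) • momentIntegrand q c R (exp (-s / R)) =
      (R : ℂ)⁻¹ * Complex.exp (((R * π / 3 : ℝ) : ℂ) * Complex.I) * substIntegrand q c R s := by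
  rw [momentIntegrand, substIntegrand]
  set t := exp (-s / R)
  have ht : 0 < t := exp_pos _
  have hamplitude : t * (((4 - t) / t) ^ ((1 : ℝ) / 2) * t ^ (q * R + c - 1)) =
      √(t * (4 - t)) * t ^ (c - 1) * exp (-(q * s)) := by
    rw [show q * R + c - 1 = q * R + (c - 1) by ring, rpow_add ht, exp_neg_div_rpow_mul hR.ne',
      ← mul_rpow_half_four_sub_div ht]
    ring
  have hphase : Complex.exp (((R * arccos (1 - t / 2) : ℝ) : ℂ) * Complex.I) =
      Complex.exp (((R * π / 3 : ℝ) : ℂ) * Complex.I) *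
        Complex.exp (((R * (arccos (1 - t / 2) - π / 3) : ℝ) : ℂ) * Complex.I) := by
    rw [← Complex.exp_add]
    push_cast
    ring_nf
  rw [Complex.real_smul, hphase, ← hamplitude]
  push_cast
  field_simp

lemma integral_momentIntegrand {R : ℝ} (hR : 0 < R) (q c : ℝ) :
    ∫ t in Ioo 0 1, momentIntegrand q c R t =
      (R : ℂ)⁻¹ * Complex.exp (((R * π / 3 : ℝ) : ℂ) * Complex.I) *
        ∫ s in Ioi 0, substIntegrand q c R s := by
  simp only [integral_Ioo_zero_one_eq_exp_neg_div hR, exp_neg_div_smul_momentIntegrand hR,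
    integral_const_mul]

lemma continuous_substIntegrand (q c R : ℝ) : Continuous (substIntegrand q c R) := by
  have hexp : Continuous fun s => exp (-s / R) := by fun_prop
  unfold substIntegrand
  refine Continuous.mul (Complex.continuous_ofReal.comp ?_) (by fun_prop)
  refine Continuous.mul (Continuous.mul (by fun_prop) ?_) (by fun_prop)
  exact hexp.rpow_const fun s => Or.inl (exp_pos _).ne'

lemma norm_substIntegrand_le {q c R s : ℝ} (hR : 0 < R) (hRc : 2 * |c - 1| ≤ q * R)
    (hs : 0 ≤ s) : ‖substIntegrand q c R s‖ ≤ 2 * exp (-(q / 2) * s) := by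
  set t := exp (-s / R)
  have ht : 0 < t := exp_pos _
  have hsqrt : √(t * (4 - t)) ≤ 2 := by
    rw [show (2 : ℝ) = √(2 ^ 2) by rw [sqrt_sq zero_le_two]]
    exact sqrt_le_sqrt (by nlinarith [sq_nonneg (t - 2)])
  have hrpow : t ^ (c - 1) ≤ exp (q / 2 * s) := by
    rw [← exp_mul, exp_le_exp, div_mul_eq_mul_div, div_le_iff₀ hR]
    nlinarith [neg_abs_le (c - 1), mul_le_mul_of_nonneg_left hRc hs]
  rw [substIntegrand, norm_mul, Complex.norm_exp_ofReal_mul_I, mul_one, Complex.norm_real,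
    norm_of_nonneg (by positivity)]
  calc √(t * (4 - t)) * t ^ (c - 1) * exp (-(q * s))
      ≤ 2 * exp (q / 2 * s) * exp (-(q * s)) := by gcongr
    _ = 2 * exp (-(q / 2) * s) := by rw [mul_assoc, ← exp_add]; ring_nf

lemma tendsto_substIntegrand (q c s : ℝ) :
    Tendsto (fun r : ℕ => substIntegrand q c r s) atTop
      (𝓝 (√3 * Complex.exp (-((q + ((√3)⁻¹ : ℝ) * Complex.I) * s)))) := by
  have ht : Tendsto (fun r : ℕ => exp (-s / r)) atTop (𝓝 1) := by
    simpa [Function.comp_def] using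
      (continuous_exp.tendsto 0).comp (tendsto_const_div_atTop_nhds_zero_nat (-s))
  have hamplitude : ContinuousAt (fun t => √(t * (4 - t)) * t ^ (c - 1)) 1 :=
    (by fun_prop : Continuous fun t : ℝ => √(t * (4 - t))).continuousAt.mul
      (continuousAt_id.rpow_const (Or.inl one_ne_zero))
  have hmodulus := (hamplitude.tendsto.comp ht).mul_const (exp (-(q * s)))
  have hphase :=
    (tendsto_natCast_mul_arccos_sub_pi_div_three s).ofReal.mul_const Complex.I |>.cexp
  convert (Complex.continuous_ofReal.tendsto _ |>.comp hmodulus).mul hphase using 2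
  · rfl
  · rw [one_rpow, mul_one, show (1 : ℝ) * (4 - 1) = 3 by norm_num, Complex.ofReal_mul,
      Complex.ofReal_exp, mul_assoc, ← Complex.exp_add]
    push_cast
    ring_nf

lemma integrableOn_substIntegrand {q c R : ℝ} (hq : 0 < q) (hR : 0 < R)
    (hRc : 2 * |c - 1| ≤ q * R) : IntegrableOn (substIntegrand q c R) (Ioi 0) :=
  ((exp_neg_integrableOn_Ioi 0 (half_pos hq)).const_mul 2).mono'
    (continuous_substIntegrand q c R).aestronglyMeasurable
    ((ae_restrict_iff' measurableSet_Ioi).mpr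
      (ae_of_all _ fun _ hs => norm_substIntegrand_le hR hRc (le_of_lt hs)))

lemma integrableOn_momentIntegrand {q c R : ℝ} (hq : 0 < q) (hR : 0 < R)
    (hRc : 2 * |c - 1| ≤ q * R) : IntegrableOn (momentIntegrand q c R) (Ioo 0 1) := by
  simp only [integrableOn_Ioo_zero_one_iff_exp_neg_div hR, exp_neg_div_smul_momentIntegrand hR]
  exact (integrableOn_substIntegrand hq hR hRc).const_mul _

lemma eventually_pos_and_two_mul_abs_sub_one_le {q : ℝ} (hq : 0 < q) (c : ℝ) :
    ∀ᶠ r : ℕ in atTop, 0 < (r : ℝ) ∧ 2 * |c - 1| ≤ q * r := by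
  have h := tendsto_natCast_atTop_atTop (R := ℝ)
  filter_upwards [h.eventually_gt_atTop 0, h.eventually_ge_atTop (2 * |c - 1| / q)]
    with r hr hrc
  exact ⟨hr, by rwa [div_le_iff₀' hq] at hrc⟩

lemma tendsto_integral_substIntegrand {q : ℝ} (hq : 0 < q) (c : ℝ) :
    Tendsto (fun r : ℕ => ∫ s in Ioi 0, substIntegrand q c r s) atTop
      (𝓝 (√3 * (q + ((√3)⁻¹ : ℝ) * Complex.I)⁻¹)) := by
  have hre : 0 < (q + ((√3)⁻¹ : ℝ) * Complex.I : ℂ).re := by simpa using hq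
  rw [← integral_exp_neg_mul_Ioi_zero hre, ← integral_const_mul]
  refine tendsto_integral_filter_of_dominated_convergence (fun s => 2 * exp (-(q / 2) * s))
    (Eventually.of_forall fun r => (continuous_substIntegrand q c r).aestronglyMeasurable) ?_
    ((exp_neg_integrableOn_Ioi 0 (half_pos hq)).const_mul 2)
    (ae_of_all _ fun s => tendsto_substIntegrand q c s)
  filter_upwards [eventually_pos_and_two_mul_abs_sub_one_le hq c] with r ⟨hr, hrc⟩
  exact (ae_restrict_iff' measurableSet_Ioi).mpr
    (ae_of_all _ fun _ hs => norm_substIntegrand_le hr hrc (le_of_lt hs))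

lemma mul_intervalIntegral_eq_re {q c R : ℝ} (hq : 0 < q) (hR : 0 < R)
    (hRc : 2 * |c - 1| ≤ q * R) :
    R * ∫ t in (0 : ℝ)..1,
        ((4 - t) / t) ^ ((1 : ℝ) / 2) * t ^ (q * R + c - 1) * cos (R * arccos (1 - t / 2)) =
      (Complex.exp (((R * π / 3 : ℝ) : ℂ) * Complex.I) *
        ∫ s in Ioi 0, substIntegrand q c R s).re := by
  have hre := integral_re (integrableOn_momentIntegrand hq hR hRc)
  simp only [RCLike.re_to_complex, re_momentIntegrand] at hre
  rw [intervalIntegral.integral_of_le zero_le_one, integral_Ioc_eq_integral_Ioo, hre,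
    integral_momentIntegrand hR, ← Complex.re_ofReal_mul]
  congr 1
  field_simp [Complex.ofReal_ne_zero.mpr hR.ne']

lemma re_exp_mul_sqrt_three_mul_inv {q : ℝ} (hq : 0 < q) (β : ℝ) :
    (Complex.exp ((β : ℂ) * Complex.I) * (√3 * (q + ((√3)⁻¹ : ℝ) * Complex.I)⁻¹)).re =
      √3 / √(q ^ 2 + 1 / 3) * cos (β - arctan (1 / (q * √3))) := by
  have harg : (√3)⁻¹ / q = 1 / (q * √3) := by field_simp
  rw [mul_left_comm, ← div_eq_mul_inv, Complex.re_ofReal_mul, re_exp_mul_I_div hq, harg,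
    inv_pow, sq_sqrt (by norm_num)]
  ring_nf

/-- Formula (7.7): for fixed `q > 0` and `c`, as `r → ∞` through positive integers,
`∫₀¹ ((4−t)/t)^{1/2} t^{qr+c−1} cos(r·arccos(1−t/2)) dt`
`= (1/r)(√3/√(q²+1/3)) cos(rπ/3 − arctan(1/(q√3))) + o(r^{−1})`. -/
theorem S1_asymptotics_q_pos (q c : ℝ) (hq : 0 < q) :
    Tendsto (fun r : ℕ =>
        (r:ℝ) * ((∫ t in (0:ℝ)..1, ((4 - t) / t) ^ ((1:ℝ)/2) * t ^ (q * r + c - 1) *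
            Real.cos (r * Real.arccos (1 - t/2))) -
          (1/(r:ℝ)) * (Real.sqrt 3 / Real.sqrt (q^2 + 1/3)) *
            Real.cos ((r:ℝ) * Real.pi / 3 - Real.arctan (1 / (q * Real.sqrt 3)))))
      atTop (nhds 0) := by
  have hlim := (tendsto_sub_nhds_zero_iff.mpr (tendsto_integral_substIntegrand hq c)).norm
  rw [norm_zero] at hlim
  refine squeeze_zero_norm' ?_ hlim
  filter_upwards [eventually_pos_and_two_mul_abs_sub_one_le hq c] with r ⟨hr, hrc⟩
  rw [mul_sub, mul_intervalIntegral_eq_re hq hr hrc, ← mul_assoc, ← mul_assoc,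
    mul_one_div_cancel hr.ne', one_mul, ← re_exp_mul_sqrt_three_mul_inv hq, ← Complex.sub_re,
    ← mul_sub, norm_eq_abs]
  calc _ ≤ ‖_‖ := Complex.abs_re_le_norm _
    _ = _ := by rw [norm_mul, Complex.norm_exp_ofReal_mul_I, one_mul]
end

section
/- Let c ≥ 1 be a fixed real number. Then as r → ∞ through positive integers, ∫₀¹ ((4−t)/t)^{1/2} t^{c−1} cos(r·arccos(1−t/2)) dt = (3/r) · cos(rπ/3 − π/2) + o(r^{−1}). -/
open Real Filter MeasureTheory Set Topology
open scoped FourierTransform Interval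

/-!
The substitution `t = 2 - 2 cos θ` turns the integral into `∫₀^{π/3} w θ cos (r θ) dθ` with
`w θ = (2 + 2 cos θ) (2 - 2 cos θ) ^ (c - 1) = 4 (2 - 2 cos θ) ^ (c - 1) - (2 - 2 cos θ) ^ c`,
because `2 sin θ √((4 - t) / t) = 2 + 2 cos θ`. Integrating by parts once,
`r ∫ w cos (r θ) = w (π/3) sin (r π/3) - ∫ w' sin (r θ)` with `w (π/3) = 3`, and the last
integral tends to `0` by the Riemann–Lebesgue lemma: `w'` is integrable because `w` is a
difference of two monotone functions of `θ`.
-/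

/-- The imaginary part of the Riemann–Lebesgue lemma at frequency `r / (2π)`. -/
theorem tendsto_integral_mul_sin_atTop {f : ℝ → ℝ} (hf : Integrable f) :
    Tendsto (fun r : ℝ => ∫ x, f x * sin (r * x)) atTop (𝓝 0) := by
  have hw : Tendsto (fun r : ℝ => r / (2 * π)) atTop (cocompact ℝ) :=
    (tendsto_id.atTop_div_const (by positivity)).mono_right atTop_le_cocompact
  have h := ((Complex.continuous_im.tendsto 0).comp
    ((Real.tendsto_integral_exp_smul_cocompact fun x => (f x : ℂ)).comp hw)).neg
  rw [Complex.zero_im, neg_zero] at h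
  refine h.congr fun r => ?_
  have hint : Integrable fun x : ℝ => 𝐞 (-(x * (r / (2 * π)))) • (f x : ℂ) := by
    simpa [mul_comm] using (Real.fourierIntegral_convergent_iff (r / (2 * π))).2 hf.ofReal
  rw [Function.comp_apply, Function.comp_apply, ← RCLike.im_to_complex, ← integral_im hint,
    ← integral_neg]
  congr 1 with x
  have : 2 * π * -(x * (r / (2 * π))) = -(r * x) := by field_simp
  simp only [Circle.smul_def, Real.fourierChar_apply, this, smul_eq_mul, RCLike.im_to_complex,
    Complex.im_mul_ofReal, Complex.exp_ofReal_mul_I_im, sin_neg]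
  ring

theorem tendsto_setIntegral_mul_sin_atTop {f : ℝ → ℝ} {s : Set ℝ} (hs : MeasurableSet s)
    (hf : IntegrableOn f s) :
    Tendsto (fun r : ℝ => ∫ x in s, f x * sin (r * x)) atTop (𝓝 0) := by
  refine (tendsto_integral_mul_sin_atTop (hf.integrable_indicator hs)).congr fun r => ?_
  rw [← integral_indicator hs]
  congr 1 with x
  exact (indicator_mul_left s f fun x => sin (r * x)).symm

theorem intervalIntegral.tendsto_integral_mul_sin_atTop {f : ℝ → ℝ} {a b : ℝ}
    (hf : IntervalIntegrable f volume a b) :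
    Tendsto (fun r : ℝ => ∫ x in a..b, f x * sin (r * x)) atTop (𝓝 0) := by
  simpa only [intervalIntegral, sub_zero] using
    (tendsto_setIntegral_mul_sin_atTop measurableSet_Ioc hf.1).sub
      (tendsto_setIntegral_mul_sin_atTop measurableSet_Ioc hf.2)

section IntegrationByParts

variable {g g' : ℝ → ℝ} {a b : ℝ}

theorem intervalIntegral.mul_integral_mul_cos_eq (hg : ContinuousOn g [[a, b]])
    (hgg' : ∀ x ∈ Ioo (min a b) (max a b), HasDerivAt g (g' x) x)
    (hg' : IntervalIntegrable g' volume a b) (r : ℝ) :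
    r * ∫ x in a..b, g x * cos (r * x) =
      g b * sin (r * b) - g a * sin (r * a) - ∫ x in a..b, g' x * sin (r * x) := by
  have hsin (x : ℝ) : HasDerivAt (fun x => sin (r * x)) (cos (r * x) * r) x := by
    simpa using ((hasDerivAt_id x).const_mul r).sin
  rw [← intervalIntegral.integral_mul_deriv_eq_deriv_mul_of_hasDerivAt hg (by fun_prop) hgg'
    (fun x _ => hsin x) hg' ((by fun_prop : Continuous _).intervalIntegrable _ _),
    ← intervalIntegral.integral_const_mul]
  congr 1 with x
  ring

theorem tendsto_mul_integral_mul_cos_sub_atTop (hg : ContinuousOn g [[a, b]])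
    (hgg' : ∀ x ∈ Ioo (min a b) (max a b), HasDerivAt g (g' x) x)
    (hg' : IntervalIntegrable g' volume a b) :
    Tendsto (fun r : ℝ => r * (∫ x in a..b, g x * cos (r * x)) -
      (g b * sin (r * b) - g a * sin (r * a))) atTop (𝓝 0) := by
  have h := (intervalIntegral.tendsto_integral_mul_sin_atTop hg').neg
  rw [neg_zero] at h
  refine h.congr fun r => ?_
  rw [intervalIntegral.mul_integral_mul_cos_eq hg hgg' hg' r]
  ring

end IntegrationByParts

section ChordPower

variable {p : ℝ}

theorem continuous_two_sub_two_mul_cos_rpow (hp : 0 ≤ p) :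
    Continuous fun θ : ℝ => (2 - 2 * cos θ) ^ p :=
  (by fun_prop : Continuous fun θ : ℝ => 2 - 2 * cos θ).rpow_const fun _ => Or.inr hp

theorem hasDerivAt_two_sub_two_mul_cos_rpow {θ : ℝ} (hθ : cos θ ≠ 1) :
    HasDerivAt (fun θ => (2 - 2 * cos θ) ^ p)
      (p * (2 - 2 * cos θ) ^ (p - 1) * (2 * sin θ)) θ := by
  have hbase : HasDerivAt (fun θ => 2 - 2 * cos θ) (2 * sin θ) θ := by
    simpa using ((hasDerivAt_cos θ).const_mul 2).const_sub 2
  convert hbase.rpow_const (p := p) (Or.inl fun h => hθ (by linarith)) using 1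
  ring

theorem cos_mem_Ioo_of_mem_Ioo {θ : ℝ} (hθ : θ ∈ Ioo 0 π) : cos θ ∈ Ioo (-1) 1 := by
  constructor
  · simpa using cos_lt_cos_of_nonneg_of_le_pi hθ.1.le le_rfl hθ.2
  · simpa using cos_lt_cos_of_nonneg_of_le_pi le_rfl hθ.2.le hθ.1

/-- Unbounded near `0` when `p < 1`, but integrable as the nonnegative derivative of a monotone
function. -/
theorem intervalIntegrable_deriv_two_sub_two_mul_cos_rpow (hp : 0 ≤ p) :
    IntervalIntegrable (fun θ => p * (2 - 2 * cos θ) ^ (p - 1) * (2 * sin θ)) volume 0 π := by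
  refine intervalIntegral.intervalIntegrable_deriv_of_nonneg
    (continuous_two_sub_two_mul_cos_rpow hp).continuousOn ?_ ?_ <;>
    rw [min_eq_left pi_pos.le, max_eq_right pi_pos.le] <;> intro θ hθ
  · exact hasDerivAt_two_sub_two_mul_cos_rpow (cos_mem_Ioo_of_mem_Ioo hθ).2.ne
  · have := sin_nonneg_of_nonneg_of_le_pi hθ.1.le hθ.2.le
    have := rpow_nonneg (by linarith [cos_le_one θ] : 0 ≤ 2 - 2 * cos θ) (p - 1)
    positivity

end ChordPower

theorem integral_zero_one_eq_integral_two_sub_two_mul_cos (F : ℝ → ℝ) :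
    ∫ t in (0 : ℝ)..1, F t = ∫ θ in (0 : ℝ)..π / 3, 2 * sin θ * F (2 - 2 * cos θ) := by
  have h := integral_Icc_deriv_smul_of_deriv_nonneg (f := fun θ => 2 - 2 * cos θ)
    (f' := fun θ => 2 * sin θ) (g := F) (a := 0) (b := π / 3) (by fun_prop)
    (fun θ _ => by simpa using ((hasDerivAt_cos θ).const_mul 2).const_sub 2)
    (fun θ hθ => by
      linarith [sin_nonneg_of_nonneg_of_le_pi hθ.1.le (by linarith [hθ.2, pi_pos])])
    (by positivity)
  simp only [cos_zero, cos_pi_div_three, smul_eq_mul] at h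
  norm_num at h
  rw [intervalIntegral.integral_of_le zero_le_one, intervalIntegral.integral_of_le (by positivity),
    ← integral_Icc_eq_integral_Ioc, ← integral_Icc_eq_integral_Ioc, h]

theorem two_mul_sin_mul_rpow_half {θ : ℝ} (hθ : θ ∈ Ioo 0 π) :
    2 * sin θ * ((4 - (2 - 2 * cos θ)) / (2 - 2 * cos θ)) ^ (1 / 2 : ℝ) =
      4 - (2 - 2 * cos θ) := by
  have hu : 0 < 2 - 2 * cos θ := by linarith [(cos_mem_Ioo_of_mem_Ioo hθ).2]
  have ha : 0 < 4 - (2 - 2 * cos θ) := by linarith [(cos_mem_Ioo_of_mem_Ioo hθ).1]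
  have hs : 0 ≤ 2 * sin θ := by linarith [sin_nonneg_of_nonneg_of_le_pi hθ.1.le hθ.2.le]
  have hsq : (2 * sin θ) ^ 2 * ((4 - (2 - 2 * cos θ)) / (2 - 2 * cos θ)) =
      (4 - (2 - 2 * cos θ)) ^ 2 := by
    rw [mul_div_assoc', div_eq_iff hu.ne']
    linear_combination 4 * (4 - (2 - 2 * cos θ)) * sin_sq_add_cos_sq θ
  rw [← sqrt_eq_rpow, ← sqrt_sq hs, ← sqrt_mul (sq_nonneg _), hsq, sqrt_sq ha.le]

theorem two_mul_sin_mul_integrand_eq (c r : ℝ) {θ : ℝ} (hθ : θ ∈ Ioo 0 π) :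
    2 * sin θ * (((4 - (2 - 2 * cos θ)) / (2 - 2 * cos θ)) ^ (1 / 2 : ℝ) *
      (2 - 2 * cos θ) ^ (c - 1) * cos (r * arccos (1 - (2 - 2 * cos θ) / 2))) =
      (4 * (2 - 2 * cos θ) ^ (c - 1) - (2 - 2 * cos θ) ^ c) * cos (r * θ) := by
  have hu : 2 - 2 * cos θ ≠ 0 := by linarith [(cos_mem_Ioo_of_mem_Ioo hθ).2]
  have harccos : arccos (1 - (2 - 2 * cos θ) / 2) = θ := by
    rw [show 1 - (2 - 2 * cos θ) / 2 = cos θ by ring, arccos_cos hθ.1.le hθ.2.le]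
  have hpow : (2 - 2 * cos θ) ^ c = (2 - 2 * cos θ) ^ (c - 1) * (2 - 2 * cos θ) := by
    rw [← rpow_add_one hu, sub_add_cancel]
  rw [harccos, hpow]
  linear_combination ((2 - 2 * cos θ) ^ (c - 1) * cos (r * θ)) * two_mul_sin_mul_rpow_half hθ

noncomputable def chordWeight (c θ : ℝ) : ℝ :=
  4 * (2 - 2 * cos θ) ^ (c - 1) - (2 - 2 * cos θ) ^ c

theorem integral_eq_integral_chordWeight_mul_cos (c r : ℝ) :
    ∫ t in (0 : ℝ)..1,
        ((4 - t) / t) ^ (1 / 2 : ℝ) * t ^ (c - 1) * cos (r * arccos (1 - t / 2)) =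
      ∫ θ in (0 : ℝ)..π / 3, chordWeight c θ * cos (r * θ) := by
  rw [integral_zero_one_eq_integral_two_sub_two_mul_cos]
  refine intervalIntegral.integral_congr_ae (.of_forall fun θ hθ => ?_)
  rw [uIoc_of_le (by positivity)] at hθ
  exact two_mul_sin_mul_integrand_eq c r ⟨hθ.1, by linarith [hθ.2, pi_pos]⟩

theorem tendsto_mul_integral_chordWeight_mul_cos_sub {c : ℝ} (hc : 1 ≤ c) :
    Tendsto (fun r : ℝ => r * (∫ θ in (0 : ℝ)..π / 3, chordWeight c θ * cos (r * θ)) -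
      3 * sin (r * (π / 3))) atTop (𝓝 0) := by
  have hne {θ : ℝ} (hθ : θ ∈ Ioo (min 0 (π / 3)) (max 0 (π / 3))) : cos θ ≠ 1 := by
    rw [min_eq_left (by positivity), max_eq_right (by positivity)] at hθ
    exact (cos_mem_Ioo_of_mem_Ioo ⟨hθ.1, by linarith [hθ.2, pi_pos]⟩).2.ne
  have hπ : [[0, π / 3]] ⊆ [[0, π]] :=
    uIcc_subset_uIcc_left (by rw [uIcc_of_le pi_pos.le]; constructor <;> linarith [pi_pos])
  have h := tendsto_mul_integral_mul_cos_sub_atTop (g := chordWeight c) (a := 0) (b := π / 3)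
    (((continuous_two_sub_two_mul_cos_rpow (by linarith)).const_mul 4).sub
      (continuous_two_sub_two_mul_cos_rpow (by linarith))).continuousOn
    (fun θ hθ => ((hasDerivAt_two_sub_two_mul_cos_rpow (hne hθ)).const_mul 4).sub
      (hasDerivAt_two_sub_two_mul_cos_rpow (hne hθ)))
    ((((intervalIntegrable_deriv_two_sub_two_mul_cos_rpow (by linarith)).const_mul 4).sub
      (intervalIntegrable_deriv_two_sub_two_mul_cos_rpow (by linarith))).mono_set hπ)
  have hw : chordWeight c (π / 3) = 3 := by norm_num [chordWeight, cos_pi_div_three]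
  simpa only [hw, mul_zero, sin_zero, sub_zero] using h

/-- Formula (7.8): for fixed `c ≥ 1`, as `r → ∞` through positive integers,
`∫₀¹ ((4−t)/t)^{1/2} t^{c−1} cos(r·arccos(1−t/2)) dt = (3/r) cos(rπ/3 − π/2) + o(r^{−1})`. -/
theorem S1_asymptotics_q_zero (c : ℝ) (hc : 1 ≤ c) :
    Tendsto (fun r : ℕ =>
        (r:ℝ) * ((∫ t in (0:ℝ)..1, ((4 - t) / t) ^ ((1:ℝ)/2) * t ^ (c - 1) *
            Real.cos (r * Real.arccos (1 - t/2))) -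
          (3/(r:ℝ)) * Real.cos ((r:ℝ) * Real.pi / 3 - Real.pi/2)))
      atTop (nhds 0) := by
  refine ((tendsto_mul_integral_chordWeight_mul_cos_sub hc).comp
    tendsto_natCast_atTop_atTop).congr' ?_
  filter_upwards [eventually_ne_atTop 0] with r hr
  have hcos : cos (r * π / 3 - π / 2) = sin (r * (π / 3)) := by
    rw [← cos_neg, neg_sub, cos_pi_div_two_sub, mul_div_assoc]
  rw [Function.comp_apply, integral_eq_integral_chordWeight_mul_cos, hcos]
  field_simp
end

section
/- Let n, N be nonnegative integers and let a, c, d, z be complex numbers such that (1−a)_n ≠ 0, and (a−n)_j ≠ 0 and (d)_j ≠ 0 for all 0 ≤ j ≤ N. Then Σ_{j=0}^{N} [(a)_j (−N)_j (c)_j/(j! (a−n)_j (d)_j)] z^j = (1/(1−a)_n) · Σ_{k=0}^{n} (−1)^k · C(n,k) · (1−a)_{n−k} · [(−N)_k (c)_k/(d)_k] · z^k · Σ_{m=0}^{N−k} [(−N+k)_m (c+k)_m/(m! (d+k)_m)] z^m. -/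
/-- The Pochhammer symbol `(a)_k = a(a+1)···(a+k−1)` for a complex number `a`. -/
noncomputable def pochC (a : ℂ) (k : ℕ) : ℂ := ∏ i ∈ Finset.range k, (a + i)

/-!
Multiply the left side by `(1−a)_n`. The shift identity `(a)_j (1−a)_n = (a−n)_j (1−a−j)_n`
turns the `j`-th term into `(1−a−j)_n` times a `₂F₁` term, and Chu–Vandermonde expands
`(1−a−j)_n = Σ_k C(n,k) (−j)_k (1−a)_{n−k}`. After swapping the two sums, the factor `(−j)_k`
kills the terms with `j < k`, and reindexing `j = k + m` produces the shifted `₂F₁` of the right side.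
-/

open Finset Polynomial

lemma pochC_eq_eval_ascPochhammer (x : ℂ) (k : ℕ) : pochC x k = (ascPochhammer ℂ k).eval x := by
  induction k with
  | zero => simp [pochC]
  | succ k ih => rw [pochC, prod_range_succ, ← pochC, ih, ascPochhammer_succ_eval]

lemma pochC_succ (x : ℂ) (k : ℕ) : pochC x (k + 1) = pochC x k * (x + k) :=
  prod_range_succ _ _

lemma pochC_add (x : ℂ) (k m : ℕ) : pochC x (k + m) = pochC x k * pochC (x + k) m := by
  rw [pochC, prod_range_add, ← pochC]
  congr 1
  exact prod_congr rfl fun i _ => by push_cast; ring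

lemma pochC_neg_natCast_of_lt {j k : ℕ} (h : j < k) : pochC (-(j : ℂ)) k = 0 :=
  prod_eq_zero (mem_range.2 h) (by simp)

lemma pochC_neg_natCast_mul_factorial {j k : ℕ} (h : k ≤ j) :
    pochC (-(j : ℂ)) k * ((j - k).factorial : ℂ) = (-1) ^ k * (j.factorial : ℂ) := by
  rw [pochC_eq_eval_ascPochhammer, ascPochhammer_eval_neg_eq_descPochhammer,
    descPochhammer_eval_eq_descFactorial, ← Nat.factorial_mul_descFactorial h]
  push_cast
  ring

lemma pochC_reflect (x : ℂ) (n : ℕ) : pochC x n = (-1) ^ n * pochC (1 - x - n) n := by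
  rw [pochC_eq_eval_ascPochhammer, pochC_eq_eval_ascPochhammer, ← neg_neg x,
    ascPochhammer_eval_neg_eq_descPochhammer, descPochhammer_eval_eq_ascPochhammer]
  ring_nf

lemma pochC_mul_pochC_one_sub (a : ℂ) (n j : ℕ) :
    pochC a j * pochC (1 - a) n = pochC (a - n) j * pochC (1 - a - j) n := by
  have hsplit : pochC (a - n) (n + j) = pochC (a - n) (j + n) := by rw [add_comm]
  rw [pochC_add, pochC_add, sub_add_cancel] at hsplit
  rw [pochC_reflect (1 - a), pochC_reflect (1 - a - j), show 1 - (1 - a) - n = a - n by ring,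
    show 1 - (1 - a - j) - n = a - n + j by ring]
  linear_combination (-1) ^ n * hsplit

lemma pochC_add_eq_sum_choose (x y : ℂ) (n : ℕ) :
    pochC (x + y) n = ∑ k ∈ range (n + 1), (n.choose k : ℂ) * (pochC x k * pochC y (n - k)) := by
  induction n with
  | zero => simp [pochC]
  | succ n ih =>
    rw [sum_choose_succ_mul (fun i j => pochC x i * pochC y j), ← sum_add_distrib, pochC_succ, ih,
      sum_mul]
    refine sum_congr rfl fun i hi => ?_
    have hi : i ≤ n := Nat.lt_succ_iff.mp (mem_range.mp hi)
    rw [Nat.succ_sub hi, pochC_succ, pochC_succ, Nat.cast_sub hi]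
    ring

noncomputable def f21Term (b c d z : ℂ) (m : ℕ) : ℂ :=
  pochC b m * pochC c m / ((m.factorial : ℂ) * pochC d m) * z ^ m

section F21Shift

variable (N : ℕ) (c d z : ℂ)

lemma pochC_neg_mul_f21Term_add (k m : ℕ) :
    pochC (-((k + m : ℕ) : ℂ)) k * f21Term (-N) c d z (k + m)
      = (-1) ^ k * (pochC (-N) k * pochC c k / pochC d k) * z ^ k *
          f21Term (-N + k) (c + k) (d + k) z m := by
  have hfac : pochC (-((k + m : ℕ) : ℂ)) k / ((k + m).factorial : ℂ)
      = (-1) ^ k / (m.factorial : ℂ) := by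
    have h := pochC_neg_natCast_mul_factorial (Nat.le_add_right k m)
    rw [Nat.add_sub_cancel_left] at h
    rw [div_eq_div_iff (by simp [Nat.factorial_ne_zero]) (by simp [Nat.factorial_ne_zero])]
    linear_combination h
  calc pochC (-((k + m : ℕ) : ℂ)) k * f21Term (-N) c d z (k + m)
      = pochC (-((k + m : ℕ) : ℂ)) k / ((k + m).factorial : ℂ) *
          (pochC (-N) k * pochC (-N + k) m * (pochC c k * pochC (c + k) m) /
            (pochC d k * pochC (d + k) m) * (z ^ k * z ^ m)) := by
        rw [f21Term, pochC_add (-N), pochC_add c, pochC_add d, pow_add]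
        ring
    _ = _ := by
        rw [hfac, f21Term]
        ring

lemma sum_pochC_neg_mul_f21Term (k : ℕ) :
    ∑ j ∈ range (N + 1), pochC (-(j : ℂ)) k * f21Term (-N) c d z j
      = (-1) ^ k * (pochC (-N) k * pochC c k / pochC d k) * z ^ k *
          ∑ m ∈ range (N - k + 1), f21Term (-N + k) (c + k) (d + k) z m := by
  rcases le_or_gt k N with hk | hk
  · have hlow : ∑ j ∈ range k, pochC (-(j : ℂ)) k * f21Term (-N) c d z j = 0 :=
      sum_eq_zero fun j hj => by rw [pochC_neg_natCast_of_lt (mem_range.mp hj), zero_mul]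
    rw [show N + 1 = k + (N - k + 1) by omega, sum_range_add, hlow, zero_add, mul_sum]
    exact sum_congr rfl fun m _ => pochC_neg_mul_f21Term_add N c d z k m
  · rw [pochC_neg_natCast_of_lt hk]
    simp only [zero_mul, mul_zero, zero_div]
    exact sum_eq_zero fun j hj => by
      rw [pochC_neg_natCast_of_lt (by have := mem_range.mp hj; omega), zero_mul]

end F21Shift

theorem F32_to_F21_reduction_general (n N : ℕ) (a c d z : ℂ)
    (h1 : pochC (1 - a) n ≠ 0)
    (h2 : ∀ j : ℕ, j ≤ N → pochC (a - (n:ℂ)) j ≠ 0) :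
    ∑ j ∈ Finset.range (N+1),
      (pochC a j * pochC (-(N:ℂ)) j * pochC c j) /
        ((j.factorial : ℂ) * pochC (a - (n:ℂ)) j * pochC d j) * z^j
    = (1 / pochC (1 - a) n) *
        ∑ k ∈ Finset.range (n+1),
          (-1:ℂ)^k * (n.choose k : ℂ) * pochC (1 - a) (n - k) *
            (pochC (-(N:ℂ)) k * pochC c k / pochC d k) * z^k *
            ∑ m ∈ Finset.range (N - k + 1),
              (pochC (-(N:ℂ) + k) m * pochC (c + k) m) /
                ((m.factorial : ℂ) * pochC (d + k) m) * z^m := by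
  rw [one_div, inv_mul_eq_div, eq_div_iff h1, sum_mul]
  calc _ = ∑ j ∈ range (N + 1), pochC (1 - a - j) n * f21Term (-N) c d z j := by
        refine sum_congr rfl fun j hj => ?_
        have hj := h2 j (Nat.lt_succ_iff.mp (mem_range.mp hj))
        calc _ = pochC a j * pochC (1 - a) n / pochC (a - n) j * f21Term (-N) c d z j := by
              rw [f21Term]; ring
          _ = _ := by rw [pochC_mul_pochC_one_sub, mul_div_cancel_left₀ _ hj]
    _ = ∑ k ∈ range (n + 1), (n.choose k : ℂ) * pochC (1 - a) (n - k) *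
          ∑ j ∈ range (N + 1), pochC (-(j : ℂ)) k * f21Term (-N) c d z j := by
        simp_rw [mul_sum]
        rw [sum_comm]
        refine sum_congr rfl fun j _ => ?_
        rw [show 1 - a - j = -j + (1 - a) by ring, pochC_add_eq_sum_choose, sum_mul]
        exact sum_congr rfl fun k _ => by ring
    _ = _ := by
        refine sum_congr rfl fun k _ => ?_
        rw [sum_pochC_neg_mul_f21Term]
        simp only [f21Term]
        ring

/-- Formula (4.1) in its terminating form: for nonnegative integers `n, N` and complex
`a, c, d, z` with `(1−a)_n ≠ 0`, `(a−n)_j ≠ 0` and `(d)_j ≠ 0` for `0 ≤ j ≤ N`,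
`Σ_{j=0}^{N} [(a)_j(−N)_j(c)_j/(j!(a−n)_j(d)_j)] z^j = (1/(1−a)_n) Σ_{k=0}^{n} (−1)^k`
`C(n,k)(1−a)_{n−k} [(−N)_k(c)_k/(d)_k] z^k Σ_{m=0}^{N−k} [(−N+k)_m(c+k)_m/(m!(d+k)_m)] z^m`. -/
theorem F32_to_F21_reduction (n N : ℕ) (a c d z : ℂ)
    (h1 : pochC (1 - a) n ≠ 0)
    (h2 : ∀ j : ℕ, j ≤ N → pochC (a - (n:ℂ)) j ≠ 0)
    (h3 : ∀ j : ℕ, j ≤ N → pochC d j ≠ 0) :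
    ∑ j ∈ Finset.range (N+1),
      (pochC a j * pochC (-(N:ℂ)) j * pochC c j) /
        ((j.factorial : ℂ) * pochC (a - (n:ℂ)) j * pochC d j) * z^j
    = (1 / pochC (1 - a) n) *
        ∑ k ∈ Finset.range (n+1),
          (-1:ℂ)^k * (n.choose k : ℂ) * pochC (1 - a) (n - k) *
            (pochC (-(N:ℂ)) k * pochC c k / pochC d k) * z^k *
            ∑ m ∈ Finset.range (N - k + 1),
              (pochC (-(N:ℂ) + k) m * pochC (c + k) m) /
                ((m.factorial : ℂ) * pochC (d + k) m) * z^m :=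
  F32_to_F21_reduction_general n N a c d z h1 h2
end

section
/- Let R₁ ≥ 1 be an integer and let a, b be integers with 0 ≤ a, b ≤ R₁. Then C(R₁−1+a, 2a)·C(R₁−1+b, 2b−1) − C(R₁−1+b, 2b)·C(R₁−1+a, 2a−1) = 2R₁ · (b−a) · (R₁+a−1)!(R₁+b−1)!/((2a)!(R₁−a)!(2b)!(R₁−b)!). -/
/-- The binomial coefficient `C(m,j)` with an integer lower index, with the convention
`C(m,j) = 0` for `j < 0`. -/
noncomputable def Cb (m : ℕ) (j : ℤ) : ℝ := if 0 ≤ j then (m.choose j.toNat : ℝ) else 0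

lemma lem1 (R1 a : ℕ) (hR1 : 1 ≤ R1) (ha : a ≤ R1) :
    (((R1-1+a).choose (2*a)) : ℝ)
      = (R1+a-1).factorial * ((R1:ℝ) - a) / ((2*a).factorial * (R1-a).factorial) := by
  rcases eq_or_lt_of_le ha with h | h
  · subst h
    rw [Nat.choose_eq_zero_of_lt (by omega)]
    simp
  · have h2 : 2*a ≤ R1-1+a := by omega
    rw [Nat.cast_choose ℝ h2]
    have e1 : R1-1+a = R1+a-1 := by omega
    have e2 : R1+a-1 - 2*a = R1-1-a := by omega
    have e3 : R1 - a = (R1-1-a) + 1 := by omega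
    rw [e1]
    rw [e2, e3, Nat.factorial_succ]
    have hc : ((R1-1-a : ℕ) : ℝ) + 1 = (R1:ℝ) - a := by
      have : ((R1-1-a : ℕ) : ℝ) = (R1:ℝ) - 1 - a := by
        push_cast [Nat.cast_sub (by omega : a ≤ R1 - 1), Nat.cast_sub hR1]; ring
      rw [this]; ring
    push_cast
    rw [hc]
    have f1 : ((2*a).factorial : ℝ) ≠ 0 := Nat.cast_ne_zero.2 (Nat.factorial_ne_zero _)
    have f2 : ((R1-1-a).factorial : ℝ) ≠ 0 := Nat.cast_ne_zero.2 (Nat.factorial_ne_zero _)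
    have f3 : (R1:ℝ) - a ≠ 0 := by
      have : (a:ℝ) < R1 := by exact_mod_cast h
      linarith
    field_simp

lemma lem2 (R1 a : ℕ) (hR1 : 1 ≤ R1) (ha : a ≤ R1) :
    Cb (R1-1+a) (2*(a:ℤ)-1)
      = (R1+a-1).factorial * (2*(a:ℝ)) / ((2*a).factorial * (R1-a).factorial) := by
  rcases Nat.eq_zero_or_pos a with h | h
  · subst h
    simp [Cb]
  · have h0 : (0:ℤ) ≤ 2*(a:ℤ)-1 := by omega
    rw [Cb, if_pos h0]
    have ht : (2*(a:ℤ)-1).toNat = 2*a-1 := by omega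
    rw [ht]
    have h2 : 2*a-1 ≤ R1-1+a := by omega
    rw [Nat.cast_choose ℝ h2]
    have e1 : R1-1+a = R1+a-1 := by omega
    have e2 : R1+a-1 - (2*a-1) = R1-a := by omega
    rw [e1]
    rw [e2]
    have e3 : 2*a = (2*a-1) + 1 := by omega
    have f1 : ((2*a-1).factorial : ℝ) ≠ 0 := Nat.cast_ne_zero.2 (Nat.factorial_ne_zero _)
    have f2 : ((R1-a).factorial : ℝ) ≠ 0 := Nat.cast_ne_zero.2 (Nat.factorial_ne_zero _)
    have ha' : (0:ℝ) < 2*(a:ℝ) := by positivity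
    rw [e3, Nat.factorial_succ]
    have hc : (((2*a-1 : ℕ) : ℝ) + 1) = 2*(a:ℝ) := by
      push_cast [Nat.cast_sub (by omega : 1 ≤ 2*a)]; ring
    push_cast
    rw [hc]
    field_simp


/-- Formula (2.6): for `R₁ ≥ 1` and `0 ≤ a, b ≤ R₁`,
`C(R₁−1+a,2a) C(R₁−1+b,2b−1) − C(R₁−1+b,2b) C(R₁−1+a,2a−1)`
`= 2R₁ (b−a) (R₁+a−1)!(R₁+b−1)!/((2a)!(R₁−a)!(2b)!(R₁−b)!)`. -/
theorem binomial_determinant_one (R1 : ℕ) (hR1 : 1 ≤ R1) (a b : ℕ)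
    (ha : a ≤ R1) (hb : b ≤ R1) :
    Cb (R1-1+a) (2*(a:ℤ)) * Cb (R1-1+b) (2*(b:ℤ)-1) -
      Cb (R1-1+b) (2*(b:ℤ)) * Cb (R1-1+a) (2*(a:ℤ)-1)
    = 2 * R1 * ((b:ℝ) - (a:ℝ)) *
        ((R1+a-1).factorial * (R1+b-1).factorial : ℝ) /
        ((2*a).factorial * (R1-a).factorial * (2*b).factorial * (R1-b).factorial : ℝ) := by
  have ea : Cb (R1-1+a) (2*(a:ℤ)) = ((R1-1+a).choose (2*a) : ℝ) := by
    rw [Cb, if_pos (by positivity)]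
    congr 1
  have eb : Cb (R1-1+b) (2*(b:ℤ)) = ((R1-1+b).choose (2*b) : ℝ) := by
    rw [Cb, if_pos (by positivity)]
    congr 1
  rw [ea, eb, lem1 R1 a hR1 ha, lem1 R1 b hR1 hb, lem2 R1 a hR1 ha, lem2 R1 b hR1 hb]
  have f1 : ((2*a).factorial : ℝ) ≠ 0 := Nat.cast_ne_zero.2 (Nat.factorial_ne_zero _)
  have f2 : ((R1-a).factorial : ℝ) ≠ 0 := Nat.cast_ne_zero.2 (Nat.factorial_ne_zero _)
  have f3 : ((2*b).factorial : ℝ) ≠ 0 := Nat.cast_ne_zero.2 (Nat.factorial_ne_zero _)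
  have f4 : ((R1-b).factorial : ℝ) ≠ 0 := Nat.cast_ne_zero.2 (Nat.factorial_ne_zero _)
  field_simp
  ring
end

section
/- Let R₂ ≥ 1 be an integer and let c, d be integers with 0 ≤ c, d ≤ R₂. Then [(1/2)C(R₂−1+c, 2c) + C(R₂−1+c, 2c+1)]·[(1/2)C(R₂−1+d, 2d−1) + C(R₂−1+d, 2d)] − [(1/2)C(R₂−1+d, 2d) + C(R₂−1+d, 2d+1)]·[(1/2)C(R₂−1+c, 2c−1) + C(R₂−1+c, 2c)] = 2R₂(R₂−1/2)(R₂+1/2) · (d−c) · (R₂+c−1)!(R₂+d−1)!/((2c+1)!(R₂−c)!(2d+1)!(R₂−d)!). -/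
/-!
Write `F(n, c) = (n+c-1)! / ((2c+1)! (n-c)!)`. The three binomial coefficients
`C(n-1+c, 2c-1+i)`, `i = 0, 1, 2`, are `F(n, c)` times `2c(2c+1)`, `(2c+1)(n-c)` and
`(n-c)(n-c-1)`, so the two entries of column `c` are `(n-c)(n-1/2) F(n, c)` and
`(2c+1) n F(n, c)`. The determinant is then `n(n-1/2) F(n,c) F(n,d)` times
`(n-c)(2d+1) - (n-d)(2c+1) = (2n+1)(d-c)`.
-/

open Nat

lemma Cb_natCast (m k : ℕ) : Cb m k = m.choose k := by simp [Cb]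

noncomputable def factorialQuotient (n c : ℕ) : ℝ := (n + c - 1)! / ((2 * c + 1)! * (n - c)!)

lemma Cb_two_mul_sub_one (n c : ℕ) (hc : c ≤ n) :
    Cb (n - 1 + c) (2 * (c : ℤ) - 1) = 2 * c * (2 * c + 1) * factorialQuotient n c := by
  rcases c with _ | c
  · simp [Cb]
  obtain ⟨q, rfl⟩ : ∃ q, n = c + 1 + q := ⟨n - (c + 1), by omega⟩
  rw [show 2 * ((c + 1 : ℕ) : ℤ) - 1 = ((2 * c + 1 : ℕ) : ℤ) by push_cast; ring, Cb_natCast,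
    factorialQuotient, show c + 1 + q - 1 + (c + 1) = 2 * c + 1 + q by omega,
    show c + 1 + q + (c + 1) - 1 = 2 * c + 1 + q by omega, show c + 1 + q - (c + 1) = q by omega,
    cast_add_choose, show 2 * (c + 1) + 1 = 2 * c + 1 + 1 + 1 by ring,
    factorial_succ (2 * c + 1 + 1), factorial_succ (2 * c + 1)]
  push_cast
  field_simp
  ring

lemma Cb_two_mul (n c : ℕ) (hn : 1 ≤ n) (hc : c ≤ n) :
    Cb (n - 1 + c) (2 * (c : ℤ)) = (2 * c + 1) * (n - c) * factorialQuotient n c := by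
  rw [show 2 * (c : ℤ) = ((2 * c : ℕ) : ℤ) by push_cast; ring, Cb_natCast]
  obtain rfl | hlt := hc.eq_or_lt
  · simp [choose_eq_zero_of_lt (show c - 1 + c < 2 * c by omega)]
  obtain ⟨q, rfl⟩ : ∃ q, n = c + q + 1 := ⟨n - c - 1, by omega⟩
  rw [factorialQuotient, show c + q + 1 - 1 + c = 2 * c + q by omega,
    show c + q + 1 + c - 1 = 2 * c + q by omega, show c + q + 1 - c = q + 1 by omega,
    cast_add_choose, factorial_succ (2 * c), factorial_succ q]
  push_cast
  field_simp
  ring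

lemma Cb_two_mul_add_one (n c : ℕ) (hc : c ≤ n) :
    Cb (n - 1 + c) (2 * (c : ℤ) + 1) = (n - c) * (n - c - 1) * factorialQuotient n c := by
  rw [show 2 * (c : ℤ) + 1 = ((2 * c + 1 : ℕ) : ℤ) by push_cast; ring, Cb_natCast]
  by_cases hlt : c + 2 ≤ n
  · obtain ⟨q, rfl⟩ : ∃ q, n = c + q + 2 := ⟨n - c - 2, by omega⟩
    rw [factorialQuotient, show c + q + 2 - 1 + c = 2 * c + 1 + q by omega,
      show c + q + 2 + c - 1 = 2 * c + 1 + q by omega, show c + q + 2 - c = q + 1 + 1 by omega,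
      cast_add_choose, factorial_succ (q + 1), factorial_succ q]
    push_cast
    field_simp
    ring
  · have hsmall : ((n : ℝ) - c) * (n - c - 1) = 0 := by
      rcases (show n = c ∨ n = c + 1 by omega) with rfl | rfl <;> push_cast <;> ring
    rw [choose_eq_zero_of_lt (by omega), hsmall]
    simp

lemma upper_entry_eq (n c : ℕ) (hn : 1 ≤ n) (hc : c ≤ n) :
    (1 / 2) * Cb (n - 1 + c) (2 * (c : ℤ)) + Cb (n - 1 + c) (2 * (c : ℤ) + 1)
      = (n - c) * (n - 1 / 2) * factorialQuotient n c := by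
  rw [Cb_two_mul n c hn hc, Cb_two_mul_add_one n c hc]
  ring

lemma lower_entry_eq (n c : ℕ) (hn : 1 ≤ n) (hc : c ≤ n) :
    (1 / 2) * Cb (n - 1 + c) (2 * (c : ℤ) - 1) + Cb (n - 1 + c) (2 * (c : ℤ))
      = (2 * c + 1) * n * factorialQuotient n c := by
  rw [Cb_two_mul_sub_one n c hc, Cb_two_mul n c hn hc]
  ring

/-- Formula (2.10): for `R₂ ≥ 1` and `0 ≤ c, d ≤ R₂`,
`[(1/2)C(R₂−1+c,2c)+C(R₂−1+c,2c+1)][(1/2)C(R₂−1+d,2d−1)+C(R₂−1+d,2d)]`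
`− [(1/2)C(R₂−1+d,2d)+C(R₂−1+d,2d+1)][(1/2)C(R₂−1+c,2c−1)+C(R₂−1+c,2c)]`
`= 2R₂(R₂−1/2)(R₂+1/2)(d−c)(R₂+c−1)!(R₂+d−1)!/((2c+1)!(R₂−c)!(2d+1)!(R₂−d)!)`. -/
theorem binomial_determinant_two (R2 : ℕ) (hR2 : 1 ≤ R2) (c d : ℕ)
    (hc : c ≤ R2) (hd : d ≤ R2) :
    ((1/2) * Cb (R2-1+c) (2*(c:ℤ)) + Cb (R2-1+c) (2*(c:ℤ)+1)) *
        ((1/2) * Cb (R2-1+d) (2*(d:ℤ)-1) + Cb (R2-1+d) (2*(d:ℤ))) -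
      ((1/2) * Cb (R2-1+d) (2*(d:ℤ)) + Cb (R2-1+d) (2*(d:ℤ)+1)) *
        ((1/2) * Cb (R2-1+c) (2*(c:ℤ)-1) + Cb (R2-1+c) (2*(c:ℤ)))
    = 2 * R2 * ((R2:ℝ) - 1/2) * ((R2:ℝ) + 1/2) * ((d:ℝ) - (c:ℝ)) *
        ((R2+c-1).factorial * (R2+d-1).factorial : ℝ) /
        ((2*c+1).factorial * (R2-c).factorial * (2*d+1).factorial * (R2-d).factorial : ℝ) := by
  rw [upper_entry_eq R2 c hR2 hc, upper_entry_eq R2 d hR2 hd, lower_entry_eq R2 c hR2 hc,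
    lower_entry_eq R2 d hR2 hd, factorialQuotient, factorialQuotient]
  field_simp
  ring
end
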